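/- arXiv:math/0202102 — 3 statements merged into one kernel-verified Lean document; each statement's English description precedes it below -/
import Mathlib

section
/- Let A ∈ SL₂(ℤ) be hyperbolic with real eigenvalues ε, ε⁻¹ where |ε| > 1. Then there exists a constant c > 0 such that gcd(A^k - I) ≥ c·|ε|^{k/2} for all positive integers k, where gcd(A^k - I) denotes the greatest common divisor of the entries of A^k - I. -/
/-!
Put `P = A ^ k`. As `det P = 1`, `det (P - 1) = 2 - trace P = 2 - ε ^ k - ε⁻¹ ^ k`, a nonzero
integer of size about `|ε| ^ k`. Write `P - 1 = d • B` with `d = gcd (P - 1)` and `B` primitive.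
Integer matrices commuting with `A = A 1 1 • 1 + g • M` (`M` primitive, `M 1 1 = 0`) are those
of the form `s • 1 + y • M`, so `B = s • 1 + y • M` with `gcd (s, y) = 1`; hence `det B` is prime
to `y`. Since `det (P - 1) = -trace (P - 1)`, `det B` divides `trace B`, so it divides
`discr B = y ^ 2 * discr M`, hence `discr M`, hence `discr A = g ^ 2 * discr M`. Therefore
`|ε| ^ k ≲ |det (P - 1)| = d ^ 2 * |det B| ≤ d ^ 2 * |discr A|`.
-/

open Polynomial

/-- The gcd of the entries of an integer matrix. -/
def matGcd {r : ℕ} (B : Matrix (Fin r) (Fin r) ℤ) : ℕ :=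
  Finset.univ.gcd fun p : Fin r × Fin r => (B p.1 p.2).natAbs

section MatGcd

variable {r : ℕ}

lemma matGcd_dvd (B : Matrix (Fin r) (Fin r) ℤ) (i j : Fin r) : (matGcd B : ℤ) ∣ B i j :=
  Int.natCast_dvd.mpr (Finset.gcd_dvd (Finset.mem_univ (i, j)))

lemma dvd_matGcd {B : Matrix (Fin r) (Fin r) ℤ} {n : ℕ} (h : ∀ i j, (n : ℤ) ∣ B i j) :
    n ∣ matGcd B :=
  Finset.dvd_gcd fun p _ => Int.natCast_dvd.mp (h p.1 p.2)

lemma matGcd_smul (n : ℤ) (B : Matrix (Fin r) (Fin r) ℤ) :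
    matGcd (n • B) = n.natAbs * matGcd B := by
  simp only [matGcd, Matrix.smul_apply, smul_eq_mul, Int.natAbs_mul]
  rw [Finset.gcd_mul_left, normalize_eq]

lemma exists_eq_matGcd_smul {B : Matrix (Fin r) (Fin r) ℤ} (hB : B ≠ 0) :
    ∃ B', B = (matGcd B : ℤ) • B' ∧ matGcd B' = 1 := by
  set d := matGcd B
  have hBd : B = (d : ℤ) • Matrix.of fun i j => B i j / d := by
    ext i j
    exact (Int.mul_ediv_cancel' (matGcd_dvd B i j)).symm
  have hd : d ≠ 0 := by
    rintro hd
    exact hB (by simpa [hd] using hBd)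
  refine ⟨_, hBd, (mul_eq_left₀ hd).mp ?_⟩
  have h := matGcd_smul (d : ℤ) (Matrix.of fun i j => B i j / d)
  rwa [← hBd, Int.natAbs_natCast, eq_comm] at h

lemma exists_sum_mul_eq_one_of_matGcd_eq_one {B : Matrix (Fin r) (Fin r) ℤ} (hB : matGcd B = 1) :
    ∃ x : Fin r × Fin r → ℤ, ∑ p, B p.1 p.2 * x p = 1 := by
  obtain ⟨x, hx⟩ := Finset.univ.gcd_eq_sum_mul fun p : Fin r × Fin r => B p.1 p.2
  have hunit : IsUnit (Finset.univ.gcd fun p : Fin r × Fin r => B p.1 p.2) := by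
    rw [Int.isUnit_iff_natAbs_eq, ← Nat.dvd_one, ← hB]
    exact dvd_matGcd fun i j => Int.natAbs_dvd.mpr (Finset.gcd_dvd (Finset.mem_univ (i, j)))
  refine ⟨fun p => (Finset.univ.gcd fun p : Fin r × Fin r => B p.1 p.2) * x p, ?_⟩
  simp only [mul_left_comm _ (Finset.gcd _ _), ← Finset.mul_sum, ← hx, Int.isUnit_mul_self hunit]

end MatGcd

lemma Commute.of_smul_left {S : Type*} [Ring S] [Module.IsTorsionFree ℤ S] {a b : S} {n : ℤ}
    (hn : n ≠ 0) (h : Commute (n • a) b) : Commute a b :=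
  smul_right_injective S hn <| by simpa only [smul_mul_assoc, mul_smul_comm] using h.eq

section TwoByTwo

variable {R : Type*} [CommRing R]

lemma det_smul_one_add_smul (s y : R) (M : Matrix (Fin 2) (Fin 2) R) :
    (s • 1 + y • M).det = s ^ 2 + y * (s * M.trace + y * M.det) := by
  simp [Matrix.det_fin_two, Matrix.trace_fin_two]
  ring

lemma discr_smul_one_add_smul (s y : R) (M : Matrix (Fin 2) (Fin 2) R) :
    (s • 1 + y • M).discr = y ^ 2 * M.discr := by
  rw [Matrix.discr_fin_two, Matrix.discr_fin_two, det_smul_one_add_smul, Matrix.trace_add,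
    Matrix.trace_smul, Matrix.trace_smul, Matrix.trace_one, Fintype.card_fin]
  simp only [smul_eq_mul]
  ring

lemma det_sub_one_of_det_eq_one {P : Matrix (Fin 2) (Fin 2) R} (hP : P.det = 1) :
    (P - 1).det = 2 - P.trace := by
  rw [Matrix.det_fin_two] at hP ⊢
  simp [Matrix.trace_fin_two]
  linear_combination hP

lemma trace_pow_of_charpoly_eq {M : Matrix (Fin 2) (Fin 2) R} {x y : R}
    (h : M.charpoly = (X - C x) * (X - C y)) (k : ℕ) : (M ^ k).trace = x ^ k + y ^ k := by
  have htrace : M.trace = x + y := by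
    nontriviality R
    rw [Matrix.charpoly_fin_two, show (X - C x) * (X - C y) = X ^ 2 - C (x + y) * X + C (x * y) by
      simp only [C_add, C_mul]; ring] at h
    have h1 := congrArg (coeff · 1) h
    simp at h1
    linear_combination -h1
  have hsq : M ^ 2 = (x + y) • M - (x * y) • 1 := by
    have hCH := M.aeval_self_charpoly
    rw [h] at hCH
    simp only [map_mul, map_sub, aeval_X, aeval_C, Algebra.algebraMap_eq_smul_one] at hCH
    rw [← sub_eq_zero, ← hCH]
    simp only [sq, sub_mul, mul_sub, Matrix.smul_mul, Matrix.mul_smul, one_mul, mul_one, smul_smul,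
      add_smul, mul_comm y x]
    abel
  induction k using Nat.twoStepInduction with
  | zero => simp; norm_num
  | one => simp [htrace]
  | more k ih₀ ih₁ =>
    rw [pow_add, hsq, mul_sub, Matrix.mul_smul, Matrix.mul_smul, mul_one, ← pow_succ,
      Matrix.trace_sub, Matrix.trace_smul, Matrix.trace_smul, ih₀, ih₁, smul_eq_mul, smul_eq_mul]
    ring

end TwoByTwo

lemma exists_eq_smul_one_add_smul_of_commute {M B : Matrix (Fin 2) (Fin 2) ℤ}
    (hM : matGcd M = 1) (hM11 : M 1 1 = 0) (hBM : Commute B M) :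
    ∃ y : ℤ, B = B 1 1 • 1 + y • M := by
  obtain ⟨x, hx⟩ := exists_sum_mul_eq_one_of_matGcd_eq_one hM
  simp only [Fintype.sum_prod_type, Fin.sum_univ_two, hM11, zero_mul, add_zero] at hx
  have h00 := congrFun (congrFun hBM.eq 0) 0
  have h01 := congrFun (congrFun hBM.eq 0) 1
  have h10 := congrFun (congrFun hBM.eq 1) 0
  simp only [Matrix.mul_apply, Fin.sum_univ_two, hM11, mul_zero, add_zero, zero_mul] at h00 h01 h10
  refine ⟨B 0 1 * x (0, 1) + B 1 0 * x (1, 0) + (B 0 0 - B 1 1) * x (0, 0), ?_⟩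
  ext i j
  fin_cases i <;> fin_cases j <;>
    simp only [Fin.zero_eta, Fin.mk_one, Matrix.add_apply, Matrix.smul_apply, Matrix.one_apply_eq,
      Matrix.one_apply_ne zero_ne_one, Matrix.one_apply_ne one_ne_zero, smul_eq_mul, hM11, mul_one,
      mul_zero, zero_add, add_zero]
  · linear_combination -(B 0 0 - B 1 1) * hx + x (0, 1) * h01 - x (1, 0) * h10
  · linear_combination -B 0 1 * hx - x (0, 0) * h01 + x (1, 0) * h00
  · linear_combination -B 1 0 * hx + x (0, 0) * h10 - x (0, 1) * h00

lemma det_dvd_discr_of_commute {A B : Matrix (Fin 2) (Fin 2) ℤ} (hB : matGcd B = 1)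
    (hBA : Commute B A) (htr : B.det ∣ B.trace) : B.det ∣ A.discr := by
  by_cases hscalar : A - A 1 1 • 1 = 0
  · rw [sub_eq_zero.mp hscalar, ← add_zero (A 1 1 • 1),
      ← zero_smul ℤ (1 : Matrix (Fin 2) (Fin 2) ℤ), discr_smul_one_add_smul]
    simp
  obtain ⟨M, hAM, hM⟩ := exists_eq_matGcd_smul hscalar
  set g : ℤ := (matGcd (A - A 1 1 • 1) : ℤ)
  have hg : g ≠ 0 := fun h => hscalar (by rw [hAM, h, zero_smul])
  have hA : A = A 1 1 • 1 + g • M := by rw [← hAM]; abel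
  have hM11 : M 1 1 = 0 := by
    have h := congrFun (congrFun hAM 1) 1
    simp only [Matrix.sub_apply, Matrix.smul_apply, Matrix.one_apply_eq, smul_eq_mul, mul_one,
      sub_self] at h
    exact (mul_eq_zero.mp h.symm).resolve_left hg
  have hBM : Commute B M := by
    have h : Commute B (g • M) := by
      rw [← hAM]
      exact hBA.sub_right ((Commute.one_right B).smul_right _)
    exact (h.symm.of_smul_left hg).symm
  obtain ⟨y, hy⟩ := exists_eq_smul_one_add_smul_of_commute hM hM11 hBM
  set s := B 1 1
  have hsy : IsCoprime s y := by
    rw [Int.isCoprime_iff_gcd_eq_one, ← Nat.dvd_one]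
    refine (dvd_matGcd fun i j => ?_).trans hB.dvd
    rw [hy]
    simp only [Matrix.add_apply, Matrix.smul_apply, smul_eq_mul]
    exact dvd_add ((Int.gcd_dvd_left _ _).mul_right _) ((Int.gcd_dvd_right _ _).mul_right _)
  have hdety : IsCoprime B.det y := by
    rw [hy, det_smul_one_add_smul]
    exact hsy.pow_left.add_mul_left_left _
  have hdvd : B.det ∣ y ^ 2 * M.discr := by
    rw [← discr_smul_one_add_smul, ← hy, Matrix.discr_fin_two]
    exact dvd_sub (dvd_pow htr two_ne_zero) (dvd_mul_left _ _)
  rw [hA, discr_smul_one_add_smul]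
  exact (hdety.pow_right.dvd_of_dvd_mul_left hdvd).mul_left _

lemma abs_det_sub_one_le {A P : Matrix (Fin 2) (Fin 2) ℤ} (hA : A.discr ≠ 0) (hP : P.det = 1)
    (hPA : Commute P A) : |(P - 1).det| ≤ (matGcd (P - 1) : ℤ) ^ 2 * |A.discr| := by
  by_cases hP1 : P - 1 = 0
  · rw [hP1, Matrix.det_zero, abs_zero]
    positivity
  obtain ⟨B, hP1B, hB⟩ := exists_eq_matGcd_smul hP1
  set d : ℤ := (matGcd (P - 1) : ℤ)
  have hd : d ≠ 0 := fun h => hP1 (by rw [hP1B, h, zero_smul])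
  have hdet : (P - 1).det = d ^ 2 * B.det := by
    rw [hP1B, Matrix.det_smul, Fintype.card_fin]
  have htr : B.trace = -d * B.det := by
    have htrB : (P - 1).trace = d * B.trace := by rw [hP1B, Matrix.trace_smul, smul_eq_mul]
    have htrP : (P - 1).trace = P.trace - 2 := by simp [Matrix.trace_sub]
    apply mul_left_cancel₀ hd
    linear_combination det_sub_one_of_det_eq_one hP + htrP - htrB - hdet
  have hBA : Commute B A := (hP1B ▸ hPA.sub_left (Commute.one_left A)).of_smul_left hd
  have hdvd := det_dvd_discr_of_commute hB hBA ⟨-d, by rw [htr]; ring⟩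
  rw [hdet, abs_mul, abs_of_nonneg (sq_nonneg d)]
  exact mul_le_mul_of_nonneg_left
    (Int.le_of_dvd (abs_pos.mpr hA) ((abs_dvd_abs _ _).mpr hdvd)) (sq_nonneg d)

lemma abs_le_four_mul_abs_of_add_inv_sub_two_eq {x : ℝ} {n : ℤ} (hx : 1 < |x|)
    (hn : x + x⁻¹ - 2 = n) : |x| ≤ 4 * |(n : ℝ)| := by
  have hn0 : n ≠ 0 := by
    rintro rfl
    have hx0 : x ≠ 0 := by rintro rfl; simp at hx; linarith
    have : (x - 1) ^ 2 = 0 := by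
      field_simp at hn
      linear_combination hn
    simp [sub_eq_zero.mp (pow_eq_zero_iff two_ne_zero |>.mp this)] at hx
  have h1 : (1 : ℝ) ≤ |(n : ℝ)| := by exact_mod_cast Int.one_le_abs hn0
  have h3 : |x⁻¹ - 2| < 3 := by
    have hinv : |x⁻¹| < 1 := by rw [abs_inv]; exact inv_lt_one_of_one_lt₀ hx
    obtain ⟨hlo, hhi⟩ := abs_lt.mp hinv
    exact abs_lt.mpr ⟨by linarith, by linarith⟩
  calc |x| = |(x + x⁻¹ - 2) - (x⁻¹ - 2)| := by ring_nf
    _ ≤ |x + x⁻¹ - 2| + |x⁻¹ - 2| := abs_sub _ _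
    _ ≤ 4 * |(n : ℝ)| := by rw [hn]; linarith

lemma abs_le_four_mul_matGcd_sq_mul_abs_discr {A P : Matrix (Fin 2) (Fin 2) ℤ} (hA : A.discr ≠ 0)
    (hP : P.det = 1) (hPA : Commute P A) {x : ℝ} (hx : 1 < |x|)
    (htr : (P.trace : ℝ) = x + x⁻¹) :
    |x| ≤ 4 * ((matGcd (P - 1) : ℝ) ^ 2 * |(A.discr : ℝ)|) := by
  have hN : x + x⁻¹ - 2 = ((-(P - 1).det : ℤ) : ℝ) := by
    rw [det_sub_one_of_det_eq_one hP]
    push_cast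
    rw [htr]
    ring
  refine (abs_le_four_mul_abs_of_add_inv_sub_two_eq hx hN).trans ?_
  rw [Int.cast_neg, abs_neg]
  gcongr
  exact_mod_cast abs_det_sub_one_le hA hP hPA

lemma inv_two_mul_sqrt_mul_sqrt_le {a b D : ℝ} (hb : 0 ≤ b) (hD : 0 < D)
    (h : a ≤ 4 * (b ^ 2 * D)) : (2 * √D)⁻¹ * √a ≤ b := by
  calc (2 * √D)⁻¹ * √a ≤ (2 * √D)⁻¹ * √((2 * √D * b) ^ 2) := by
        gcongr
        rw [mul_pow, mul_pow, Real.sq_sqrt hD.le]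
        linarith
    _ = b := by
        rw [Real.sqrt_sq (by positivity)]
        field_simp

theorem stmt_8 (A : Matrix (Fin 2) (Fin 2) ℤ) (hdet : A.det = 1)
    (ε : ℝ) (hε : 1 < |ε|)
    (hchar : (A.map (Int.cast : ℤ → ℝ)).charpoly = (X - C ε) * (X - C ε⁻¹)) :
    ∃ c : ℝ, 0 < c ∧ ∀ k : ℕ, 1 ≤ k →
      c * |ε| ^ ((k : ℝ) / 2) ≤ (matGcd (A ^ k - 1) : ℝ) := by
  have htrace (k : ℕ) : ((A ^ k).trace : ℝ) = ε ^ k + ε⁻¹ ^ k := by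
    rw [← trace_pow_of_charpoly_eq hchar]
    exact (AddMonoidHom.map_trace (Int.castRingHom ℝ) _).trans
      (congrArg Matrix.trace (Matrix.map_pow A (Int.castRingHom ℝ) k))
  have hdiscr : A.discr ≠ 0 := by
    have hε0 : ε ≠ 0 := by rintro rfl; simp at hε; linarith
    have hne : ε ≠ ε⁻¹ := fun h => by
      have := congrArg abs h
      rw [abs_inv] at this
      linarith [inv_lt_one_of_one_lt₀ hε]
    have hcast : (A.discr : ℝ) = (ε - ε⁻¹) ^ 2 := by
      rw [Matrix.discr_fin_two, hdet]
      push_cast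
      rw [show (A.trace : ℝ) = ε + ε⁻¹ by simpa using htrace 1]
      linear_combination 4 * mul_inv_cancel₀ hε0
    exact Int.cast_ne_zero.mp (hcast ▸ pow_ne_zero 2 (sub_ne_zero.mpr hne))
  refine ⟨(2 * √|(A.discr : ℝ)|)⁻¹, by positivity, fun k hk => ?_⟩
  rw [div_eq_mul_one_div, Real.rpow_mul (abs_nonneg ε), Real.rpow_natCast, ← Real.sqrt_eq_rpow]
  refine inv_two_mul_sqrt_mul_sqrt_le (Nat.cast_nonneg _) (by positivity) ?_
  rw [← abs_pow]
  refine abs_le_four_mul_matGcd_sq_mul_abs_discr hdiscr (by rw [Matrix.det_pow, hdet, one_pow])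
    (Commute.pow_self A k) (by rw [abs_pow]; exact one_lt_pow₀ hε (by omega)) ?_
  rw [htrace, inv_pow]
end

section
/- Let p > 3 be prime, ζ_p a primitive p-th root of unity, and u a non-real unit of ℤ[ζ_p]. Let A(u) ∈ SL_{p-1}(ℤ) be the matrix of multiplication by u on ℤ[ζ_p] with respect to the basis 1, ζ_p, ..., ζ_p^{p-2}. Then for every positive integer k with k ≢ 0 (mod p), gcd(A(u)^k - I) = 1. -/
open Polynomial NumberField IntermediateField ComplexConjugate

section MatrixOfMultiplication

variable {S ι : Type*} [CommRing S] [Fintype ι] [DecidableEq ι] {u : S} {b : ι → S}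
  {A : Matrix ι ι ℤ}

theorem pow_mul_eq_sum_matrix_pow (hA : ∀ i, u * b i = ∑ j, A j i • b j) (n : ℕ) (i : ι) :
    u ^ n * b i = ∑ j, (A ^ n) j i • b j := by
  induction n generalizing i with
  | zero => simp [Matrix.one_apply]
  | succ n ih =>
    calc u ^ (n + 1) * b i = ∑ j, (A ^ n) j i • (u * b j) := by
          rw [pow_succ', mul_assoc, ih, Finset.mul_sum]
          simp only [mul_smul_comm]
      _ = ∑ l, (A ^ (n + 1)) l i • b l := by
          simp_rw [hA, Finset.smul_sum, smul_smul, pow_succ', Matrix.mul_apply, Finset.sum_smul]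
          rw [Finset.sum_comm]
          simp only [mul_comm]

theorem pow_mul_sub_eq_sum_matrix_pow_sub_one (hA : ∀ i, u * b i = ∑ j, A j i • b j) (n : ℕ)
    (i : ι) :
    u ^ n * b i - b i = ∑ j, (A ^ n - 1) j i • b j := by
  simp [sub_smul, Matrix.one_apply, pow_mul_eq_sum_matrix_pow hA]

end MatrixOfMultiplication

theorem intCast_matGcd_dvd {r : ℕ} (B : Matrix (Fin r) (Fin r) ℤ) (i j : Fin r) :
    (matGcd B : ℤ) ∣ B i j :=
  Int.natCast_dvd.mpr (Finset.gcd_dvd (f := fun p : Fin r × Fin r => (B p.1 p.2).natAbs)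
    (Finset.mem_univ (i, j)))

theorem natCast_matGcd_pow_sub_one_dvd {S : Type*} [CommRing S] {r : ℕ} {u : S} {b : Fin r → S}
    {A : Matrix (Fin r) (Fin r) ℤ} (hA : ∀ i, u * b i = ∑ j, A j i • b j) {i : Fin r}
    (hi : b i = 1) (n : ℕ) : (matGcd (A ^ n - 1) : S) ∣ u ^ n - 1 := by
  have h := pow_mul_sub_eq_sum_matrix_pow_sub_one hA n i
  rw [hi, mul_one] at h
  rw [h]
  refine Finset.dvd_sum fun j _ => ?_
  rw [zsmul_eq_mul]
  exact_mod_cast (Int.cast_dvd_cast _ _ (intCast_matGcd_dvd _ j i)).mul_right _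

theorem dvd_sq_mul_sub_one {S : Type*} [CommRing S] {g a b c : S} (hbc : b * c = 1)
    (ha : g ∣ a - 1) (hb : g ∣ b - 1) : g ∣ (a * c) ^ 2 - 1 := by
  have h : (a * c) ^ 2 - 1 = c ^ 2 * ((a - 1) * (a + 1) - (b - 1) * (b + 1)) := by
    linear_combination (b * c + 1) * hbc
  rw [h]
  exact (dvd_sub (ha.mul_right _) (hb.mul_right _)).mul_left _

theorem Int.dvd_of_intCast_eq_mul {L : Type*} [Field L] [CharZero L] {a b : ℤ} {x : L}
    (hx : IsIntegral ℤ x) (h : (b : L) = a * x) : a ∣ b := by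
  rcases eq_or_ne a 0 with rfl | ha
  · simp_all
  have hxq : x = ((b / a : ℚ) : L) := by
    push_cast
    rw [h, mul_div_cancel_left₀ _ (Int.cast_ne_zero.mpr ha)]
  obtain ⟨y, hy⟩ := IsIntegrallyClosed.isIntegral_iff.mp <|
    (isIntegral_algebraMap_iff (algebraMap ℚ L).injective).mp (hxq ▸ hx)
  have : ((y : ℚ)) = b / a := hy
  field_simp at this
  exact Dvd.intro_left y (by exact_mod_cast this)

theorem Nat.eq_one_of_pow_dvd_prime {g n p : ℕ} (hp : p.Prime) (hn : 2 ≤ n) (h : g ^ n ∣ p) :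
    g = 1 := by
  rcases hp.eq_one_or_self_of_dvd g ((dvd_pow_self g (by omega)).trans h) with hg | rfl
  · exact hg
  · have := Nat.le_of_dvd hp.pos ((pow_dvd_pow g hn).trans h)
    nlinarith [hp.two_le]

namespace IsPrimitiveRoot

theorem sub_one_pow_totient_dvd {A : Type*} [CommRing A] [IsDomain A] {ζ : A} {n : ℕ}
    [NeZero n] (hζ : IsPrimitiveRoot ζ n) : (ζ - 1) ^ n.totient ∣ (cyclotomic n A).eval 1 := by
  rw [cyclotomic_eq_prod_X_sub_primitiveRoots hζ, eval_prod, ← hζ.card_primitiveRoots,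
    ← Finset.prod_const]
  refine Finset.prod_dvd_prod_of_dvd _ _ fun μ hμ => ?_
  obtain ⟨i, -, rfl⟩ :=
    hζ.eq_pow_of_pow_eq_one ((mem_primitiveRoots (NeZero.pos n)).mp hμ).pow_eq_one
  rw [eval_sub, eval_X, eval_C, ← neg_sub (ζ ^ i), dvd_neg]
  simpa only [one_pow] using sub_dvd_pow_sub_pow ζ 1 i

theorem eq_one_of_natCast_dvd_sub_one {L : Type*} [Field L] [CharZero L]
    {R : Subalgebra ℤ L} (hR : R ≤ integralClosure ℤ L) {p g : ℕ} [Fact p.Prime]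
    (hp : 2 < p) {η : R} (hη : IsPrimitiveRoot η p) (h : (g : R) ∣ η - 1) : g = 1 := by
  have hp' : p.Prime := Fact.out
  have hηp := hη.sub_one_pow_totient_dvd
  rw [eval_one_cyclotomic_prime, Nat.totient_prime hp'] at hηp
  obtain ⟨s, hs⟩ := (pow_dvd_pow_of_dvd h (p - 1)).trans hηp
  refine Nat.eq_one_of_pow_dvd_prime hp' (by omega : 2 ≤ p - 1) (Int.natCast_dvd_natCast.mp ?_)
  exact Int.dvd_of_intCast_eq_mul (hR s.2) (by exact_mod_cast congrArg Subtype.val hs)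

theorem prime_dvd_eval_one_sub_of_aeval_eq {K : Type*} [Field K] [CharZero K] {p : ℕ}
    [Fact p.Prime] {ζ : K} (hζ : IsPrimitiveRoot ζ p) {f g : ℤ[X]}
    (h : aeval ζ f = aeval ζ g) :
    (p : ℤ) ∣ f.eval 1 - g.eval 1 := by
  have hdvd : cyclotomic p ℤ ∣ f - g := by
    rw [cyclotomic_eq_minpoly hζ (Nat.Prime.pos Fact.out)]
    exact minpoly.isIntegrallyClosed_dvd (hζ.isIntegral (Nat.Prime.pos Fact.out))
      (by rw [map_sub, h, sub_self])
  obtain ⟨q, hq⟩ := hdvd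
  rw [← eval_sub, hq, eval_mul, eval_one_cyclotomic_prime]
  exact dvd_mul_right _ _

end IsPrimitiveRoot

namespace Complex

theorem conj_eq_pow_pred_of_pow_eq_one {ζ : ℂ} {n : ℕ} (h : ζ ^ n = 1) (hn : n ≠ 0) :
    conj ζ = ζ ^ (n - 1) := by
  have hζ : ζ ≠ 0 := by rintro rfl; simp [hn] at h
  apply mul_left_cancel₀ hζ
  rw [mul_conj', norm_eq_one_of_pow_eq_one h hn, ← pow_succ', Nat.sub_add_cancel
    (Nat.one_le_iff_ne_zero.mpr hn), h]
  simp

theorem conj_aeval_eq_aeval_comp {ζ : ℂ} {n : ℕ} (h : ζ ^ n = 1) (hn : n ≠ 0) (f : ℤ[X]) :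
    conj (aeval ζ f) = aeval ζ (f.comp (X ^ (n - 1))) := by
  rw [aeval_comp, map_pow, aeval_X, ← conj_eq_pow_pred_of_pow_eq_one h hn]
  exact (aeval_algHom_apply (starRingEnd ℂ).toIntAlgHom ζ f).symm

theorem conj_mem_adjoin {ζ : ℂ} {n : ℕ} (h : ζ ^ n = 1) (hn : n ≠ 0) {x : ℂ}
    (hx : x ∈ Algebra.adjoin ℤ {ζ}) : conj x ∈ Algebra.adjoin ℤ {ζ} := by
  rw [Algebra.adjoin_singleton_eq_range_aeval] at hx ⊢
  obtain ⟨f, rfl⟩ := hx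
  exact ⟨_, (conj_aeval_eq_aeval_comp h hn f).symm⟩

end Complex

namespace IsPrimitiveRoot

variable {p : ℕ} {ζ u v : ℂ}

theorem mul_conj_ne_neg_one [Fact p.Prime] (hp : p ≠ 2) (hζ : IsPrimitiveRoot ζ p)
    (hu : u ∈ Algebra.adjoin ℤ {ζ}) (hv : v ∈ Algebra.adjoin ℤ {ζ}) (huv : u * v = 1) :
    u * conj v ≠ -1 := by
  intro hw
  obtain ⟨f, rfl⟩ : ∃ f : ℤ[X], aeval ζ f = u := by
    rwa [Algebra.adjoin_singleton_eq_range_aeval] at hu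
  obtain ⟨g, rfl⟩ : ∃ g : ℤ[X], aeval ζ g = v := by
    rwa [Algebra.adjoin_singleton_eq_range_aeval] at hv
  rw [Complex.conj_aeval_eq_aeval_comp hζ.pow_eq_one (NeZero.ne p)] at hw
  -- Reduction modulo `ζ - 1` is `f(ζ) ↦ f(1) mod p`, and it sends both `u * v` and
  -- `u * conj v` to `f(1) * g(1)`.
  have h₁ := hζ.prime_dvd_eval_one_sub_of_aeval_eq (f := f * g) (g := 1) (by simpa using huv)
  have h₂ := hζ.prime_dvd_eval_one_sub_of_aeval_eq (f := f * g.comp (X ^ (p - 1))) (g := -1)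
    (by simpa using hw)
  simp only [eval_mul, eval_comp, eval_pow, eval_X, one_pow, eval_one, eval_neg] at h₁ h₂
  have h2 : p ∣ 2 := by exact_mod_cast (by simpa using dvd_sub h₂ h₁ : (p : ℤ) ∣ 2)
  exact hp ((Nat.prime_dvd_prime_iff_eq Fact.out Nat.prime_two).mp h2)

theorem mul_conj_pow_two_mul_eq_one [NeZero p] (hp : 2 < p) (hζ : IsPrimitiveRoot ζ p)
    (hu : u ∈ Algebra.adjoin ℤ {ζ}) (hv : v ∈ Algebra.adjoin ℤ {ζ}) (huv : u * v = 1) :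
    (u * conj v) ^ (2 * p) = 1 := by
  let K := ℚ⟮ζ⟯
  have : IsCyclotomicExtension {p} ℚ K :=
    (isCyclotomicExtension_singleton_iff_eq_adjoin p ℚ ℂ K hζ).mpr rfl
  have : NumberField K := IsCyclotomicExtension.numberField {p} ℚ K
  have : IsCMField K := IsCyclotomicExtension.Rat.isCMField K (S := {p}) ⟨p, rfl, hp⟩
  have hsub : Algebra.adjoin ℤ {ζ} ≤ K.toSubalgebra.restrictScalars ℤ :=
    Algebra.adjoin_le (by simpa using mem_adjoin_simple_self ℚ ζ)
  have hint := adjoin_le_integralClosure (hζ.isIntegral (NeZero.pos p))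
  let ofAdjoin : ∀ x ∈ Algebra.adjoin ℤ {ζ}, 𝓞 K := fun x hx =>
    ⟨⟨x, hsub hx⟩, (isIntegral_algebraMap_iff (algebraMap K ℂ).injective).mp (hint hx)⟩
  let uK : (𝓞 K)ˣ :=
    ⟨ofAdjoin u hu, ofAdjoin v hv, by ext; exact huv, by ext; exact (mul_comm v u).trans huv⟩
  have hw : ((((IsCMField.unitsMulComplexConjInv K uK : (𝓞 K)ˣ) : 𝓞 K) : K) : ℂ) =
      u * conj v := by
    rw [IsCMField.unitsMulComplexConjInv_apply, ← map_inv]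
    exact congrArg (u * ·) (IsCMField.complexEmbedding_complexConj K (algebraMap K ℂ) _)
  obtain ⟨c, hc⟩ : Units.torsionOrder K ∣ 2 * p := by
    rw [IsCyclotomicExtension.Rat.torsionOrder_eq (n := p)]
    split_ifs <;> simp
  have htors := congrArg (fun x : Units.torsion K => ((((x : (𝓞 K)ˣ) : 𝓞 K) : K) : ℂ))
    (pow_card_eq_one' (x := IsCMField.unitsMulComplexConjInv K uK))
  simp only [SubmonoidClass.coe_pow, Units.val_pow_eq_pow_val, map_pow] at htors
  rw [hc, pow_mul, ← hw]
  simpa [Units.torsionOrder] using congrArg (· ^ c) htors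

theorem isPrimitiveRoot_mul_conj_sq [Fact p.Prime] (hp : 2 < p) (hζ : IsPrimitiveRoot ζ p)
    (hu : u ∈ Algebra.adjoin ℤ {ζ}) (hv : v ∈ Algebra.adjoin ℤ {ζ}) (huv : u * v = 1)
    (hnonreal : conj u ≠ u) : IsPrimitiveRoot ((u * conj v) ^ 2) p := by
  have hp' : p.Prime := Fact.out
  refine isPrimitiveRoot_of_mem_nthRootsFinset hp'
    ((Polynomial.mem_nthRootsFinset hp'.pos _).mpr ?_) ?_
  · rw [← pow_mul]
    exact hζ.mul_conj_pow_two_mul_eq_one hp hu hv huv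
  · rw [sq, Ne, mul_self_eq_one_iff, not_or]
    refine ⟨fun h => hnonreal ?_, hζ.mul_conj_ne_neg_one hp.ne' hu hv huv⟩
    have hc : conj u * conj v = 1 := by rw [← map_mul, huv, map_one]
    linear_combination (-conj u) * h + u * hc

end IsPrimitiveRoot

theorem stmt_14 (p : ℕ) (hp : p.Prime) (hp3 : 3 < p)
    (ζ : ℂ) (hζ : IsPrimitiveRoot ζ p)
    (u : ℂ) (hu : u ∈ Algebra.adjoin ℤ ({ζ} : Set ℂ))
    (huunit : ∃ v ∈ Algebra.adjoin ℤ ({ζ} : Set ℂ), u * v = 1)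
    (hnonreal : (starRingEnd ℂ) u ≠ u)
    (A : Matrix (Fin (p - 1)) (Fin (p - 1)) ℤ)
    (hA : ∀ i : Fin (p - 1), u * ζ ^ (i : ℕ) =
      ∑ j : Fin (p - 1), (A j i : ℂ) * ζ ^ (j : ℕ)) :
    ∀ k : ℕ, 1 ≤ k → ¬ p ∣ k → matGcd (A ^ k - 1) = 1 := by
  intro k _ hpk
  have : Fact p.Prime := ⟨hp⟩
  obtain ⟨v, hv, huv⟩ := huunit
  have hw := hζ.isPrimitiveRoot_mul_conj_sq (by omega) hu hv huv hnonreal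
  set R := Algebra.adjoin ℤ ({ζ} : Set ℂ)
  let conjR : R →+* R := (starRingEnd ℂ).restrict R R
    fun _ hx => Complex.conj_mem_adjoin hζ.pow_eq_one hp.ne_zero hx
  let ζR : R := ⟨ζ, Algebra.self_mem_adjoin_singleton ℤ ζ⟩
  let uR : R := ⟨u, hu⟩
  let vR : R := ⟨v, hv⟩
  set g := matGcd (A ^ k - 1)
  have hgu : (g : R) ∣ uR ^ k - 1 := by
    have hAR (i : Fin (p - 1)) : uR * ζR ^ (i : ℕ) = ∑ j, A j i • ζR ^ (j : ℕ) :=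
      Subtype.ext (by simpa [zsmul_eq_mul] using hA i)
    exact natCast_matGcd_pow_sub_one_dvd hAR (i := ⟨0, by omega⟩) (pow_zero _) k
  have hgcu : (g : R) ∣ conjR uR ^ k - 1 := by simpa using map_dvd conjR hgu
  have hgη : (g : R) ∣ (uR ^ k * conjR vR ^ k) ^ 2 - 1 := by
    refine dvd_sq_mul_sub_one ?_ hgu hgcu
    rw [← mul_pow, ← map_mul, show uR * vR = 1 from Subtype.ext huv, map_one, one_pow]
  have hη : IsPrimitiveRoot ((uR ^ k * conjR vR ^ k) ^ 2) p := by
    rw [← mul_pow, ← pow_mul, mul_comm k, pow_mul]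
    exact (IsPrimitiveRoot.coe_submonoidClass_iff.mp hw).pow_of_coprime k
      (Nat.coprime_comm.mp (hp.coprime_iff_not_dvd.mpr hpk))
  exact hη.eq_one_of_natCast_dvd_sub_one (adjoin_le_integralClosure (hζ.isIntegral hp.pos))
    (by omega) hgη
end

section
/- Let p be an odd prime, ζ a primitive p-th root of unity, and let α_1, ..., α_{p-1} be integers with α_j = α_{p-j} for all j (set α_0 = 0). Let x, k be integers with 2xk ≢ 0 (mod p). Write u^k := ζ^{xk} Σ_{j} α_j ζ^j = Σ_{i=0}^{p-2} c_i ζ^i in the basis 1, ζ, ..., ζ^{p-2}, where c_i = α_{i - xk} - α_{p-1-xk} (indices mod p). Then either c_0 = 0, or c_0 = c_m for m = 2xk mod p with m ≠ 0. -/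
theorem stmt_15 (p : ℕ) (hp : p.Prime) (hodd : Odd p)
    (α : ZMod p → ℤ) (h0 : α 0 = 0) (hsym : ∀ j : ZMod p, α (-j) = α j)
    (x k : ℤ) (hxk : ((2 * x * k : ℤ) : ZMod p) ≠ 0)
    (c : ZMod p → ℤ)
    (hc : ∀ i : ZMod p, c i = α (i - ((x * k : ℤ) : ZMod p)) - α (-1 - ((x * k : ℤ) : ZMod p))) :
    c 0 = 0 ∨ (((2 * x * k : ℤ) : ZMod p) ≠ 0 ∧ c (((2 * x * k : ℤ) : ZMod p)) = c 0) := by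
  right
  refine ⟨hxk, ?_⟩
  rw [hc, hc]
  have h1 : ((2 * x * k : ℤ) : ZMod p) - ((x * k : ℤ) : ZMod p) = ((x * k : ℤ) : ZMod p) := by
    push_cast; ring
  rw [h1]
  have h2 : (0 : ZMod p) - ((x * k : ℤ) : ZMod p) = -((x * k : ℤ) : ZMod p) := by ring
  rw [h2, hsym]
end
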